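/- arXiv:2103.00386 — 2 statements merged into one kernel-verified Lean document; each statement's English description precedes it below -/
import Mathlib

section
/- Let R be a finite monadic convergent SRS over a finite alphabet Σ, and let μ, X, Y be irreducible strings with X ≠ Y. Then μ·X ↓_R μ·Y if and only if there exist strings X', Y', W, γ such that: (1) γ ∈ MP(μ); (2) X = X'·W, Y = Y'·W, and X' ≠ Y'; and (3) μ·X' →!_R γ and μ·Y' →!_R γ. -/
/- Strings over an alphabet `σ` are modelled as `List σ`; a finite string
rewriting system is a finite list of rules `(l, r)`. -/

namespace SRS

variable {σ : Type*}

/-- One-step rewrite relation: `u →_R v`. -/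
def Step (R : List (List σ × List σ)) (u v : List σ) : Prop :=
  ∃ x y l r, (l, r) ∈ R ∧ u = x ++ l ++ y ∧ v = x ++ r ++ y

/-- `u →*_R v`: reflexive-transitive closure. -/
def Reduces (R : List (List σ × List σ)) : List σ → List σ → Prop :=
  Relation.ReflTransGen (Step R)

/-- `u ↔*_R v`: reflexive-symmetric-transitive closure. -/
def Equiv (R : List (List σ × List σ)) : List σ → List σ → Prop :=
  Relation.EqvGen (Step R)

/-- `u ↓_R v`: joinability, i.e. a common reduct exists. -/
def Joins (R : List (List σ × List σ)) : List σ → List σ → Prop :=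
  Relation.Join (Reduces R)

/-- A string is irreducible if no rule applies to it. -/
def Irreducible (R : List (List σ × List σ)) (u : List σ) : Prop :=
  ∀ v, ¬ Step R u v

/-- `u →!_R v`: `v` is an `R`-normal form of `u`. -/
def NormalizesTo (R : List (List σ × List σ)) (u v : List σ) : Prop :=
  Reduces R u v ∧ Irreducible R v

/-- Terminating: no infinite chain of rewrite steps. -/
def Terminating (R : List (List σ × List σ)) : Prop :=
  ¬ ∃ f : ℕ → List σ, ∀ n, Step R (f n) (f (n + 1))

def Confluent (R : List (List σ × List σ)) : Prop :=
  ∀ t s₁ s₂, Reduces R t s₁ → Reduces R t s₂ →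
    ∃ t', Reduces R s₁ t' ∧ Reduces R s₂ t'

def Convergent (R : List (List σ × List σ)) : Prop :=
  Terminating R ∧ Confluent R

/-- Dwindling: every right-hand side is a proper prefix of its left-hand side. -/
def Dwindling (R : List (List σ × List σ)) : Prop :=
  ∀ p ∈ R, p.2 <+: p.1 ∧ p.2 ≠ p.1

/-- Monadic: length-reducing with right-hand sides of length at most 1. -/
def Monadic (R : List (List σ × List σ)) : Prop :=
  ∀ p ∈ R, p.2.length < p.1.length ∧ p.2.length ≤ 1

/-- `MP α`: normal forms of `p ++ s` with `p` a prefix of `α` and `s` a single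
symbol or the empty string. -/
def MP (R : List (List σ × List σ)) (α : List σ) : Set (List σ) :=
  { γ | ∃ p s, p <+: α ∧ s.length ≤ 1 ∧ NormalizesTo R (p ++ s) γ }

end SRS

/-!
A monadic rule leaves at most one letter behind. Starting from `μ ++ X` with `μ` and `X`
irreducible, every redex must therefore start in the prefix of `μ` still present and cover the
letter left by the previous step, so every reduct of `μ ++ X` has the shape `p ++ s ++ Z` with
`p <+: μ`, `|s| ≤ 1`, `X = X₁ ++ Z` and `μ ++ X₁ →* p ++ s`. For a common normal form
`N = α ++ Z = β ++ Z'` of `μ ++ X` and `μ ++ Y` (rules shorten strings, so one exists), `α` and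
`β` lie in `MP(μ)`, and cutting `X` and `Y` before the shorter of `Z`, `Z'` gives the split.
Conversely, appending `W` to the common normal form `γ` joins `μ ++ X` and `μ ++ Y`.
-/

namespace SRS

open List

variable {σ : Type*} {R : List (List σ × List σ)}

theorem Step.append_right {u v : List σ} (w : List σ) (h : Step R u v) :
    Step R (u ++ w) (v ++ w) := by
  obtain ⟨x, y, l, r, hlr, rfl, rfl⟩ := h
  exact ⟨x, y ++ w, l, r, hlr, by simp, by simp⟩

theorem Reduces.append_right {u v : List σ} (w : List σ) (h : Reduces R u v) :
    Reduces R (u ++ w) (v ++ w) :=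
  h.lift (· ++ w) fun _ _ => Step.append_right w

theorem Joins.append_right {u v : List σ} (w : List σ) (h : Joins R u v) :
    Joins R (u ++ w) (v ++ w) :=
  let ⟨t, hu, hv⟩ := h
  ⟨t ++ w, hu.append_right w, hv.append_right w⟩

theorem Step.length_lt (hmon : Monadic R) {u v : List σ} (h : Step R u v) :
    v.length < u.length := by
  obtain ⟨x, y, l, r, hlr, rfl, rfl⟩ := h
  simpa using (hmon _ hlr).1

theorem exists_normalizesTo (hmon : Monadic R) (u : List σ) : ∃ v, NormalizesTo R u v := by
  induction u using (measure List.length).wf.induction with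
  | _ u ih =>
    by_cases hu : Irreducible R u
    · exact ⟨u, .refl, hu⟩
    · obtain ⟨v, huv⟩ : ∃ v, Step R u v := by simpa [Irreducible] using hu
      obtain ⟨w, hvw, hw⟩ := ih v (huv.length_lt hmon)
      exact ⟨w, .head huv hvw, hw⟩

theorem irreducible_iff_forall_not_infix {u : List σ} :
    Irreducible R u ↔ ∀ l r, (l, r) ∈ R → ¬ l <:+: u := by
  constructor
  · rintro hu l r hlr ⟨x, y, rfl⟩
    exact hu _ ⟨x, y, l, r, hlr, rfl, rfl⟩
  · rintro hu v ⟨x, y, l, r, hlr, rfl, -⟩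
    exact hu l r hlr (infix_append x l y)

theorem Irreducible.of_infix {u w : List σ} (hw : Irreducible R w) (h : u <:+: w) :
    Irreducible R u :=
  irreducible_iff_forall_not_infix.2 fun l r hlr hl =>
    irreducible_iff_forall_not_infix.1 hw l r hlr (hl.trans h)

theorem Step.exists_spanning_redex {p s Z N : List σ} (hp : Irreducible R p)
    (hZ : Irreducible R Z) (hs : s.length ≤ 1) (h : Step R (p ++ s ++ Z) N) :
    ∃ x w v y l r, (l, r) ∈ R ∧ p = x ++ w ∧ Z = v ++ y ∧ l = w ++ s ++ v ∧
      N = x ++ r ++ y := by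
  obtain ⟨x, y, l, r, hlr, hpsZ, rfl⟩ := h
  have hx : x.length ≤ p.length := by
    by_contra! hlt
    obtain ⟨a, rfl⟩ : p ++ s <+: x :=
      prefix_of_prefix_length_le ⟨Z, rfl⟩ ⟨l ++ y, by rw [hpsZ, append_assoc]⟩
        (by simp only [length_append]; omega)
    have hZ' : Z = a ++ l ++ y := by simpa using hpsZ
    exact irreducible_iff_forall_not_infix.1 hZ l r hlr (hZ' ▸ infix_append a l y)
  obtain ⟨w, rfl⟩ : x <+: p :=
    prefix_of_prefix_length_le (l₃ := p ++ s ++ Z) ⟨l ++ y, by rw [hpsZ, append_assoc]⟩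
      ⟨s ++ Z, by rw [append_assoc]⟩ hx
  have hwsZ : w ++ s ++ Z = l ++ y := by simpa using hpsZ
  have hl : (w ++ s).length ≤ l.length := by
    by_contra! hlt
    have hlw : l <+: w :=
      prefix_of_prefix_length_le ⟨y, rfl⟩ ⟨s ++ Z, by rw [← append_assoc, hwsZ]⟩
        (by simp only [length_append] at hlt; omega)
    exact irreducible_iff_forall_not_infix.1 hp l r hlr (hlw.isInfix.trans infix_append_right)
  obtain ⟨v, rfl⟩ : w ++ s <+: l := prefix_of_prefix_length_le ⟨Z, rfl⟩ ⟨y, hwsZ.symm⟩ hl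
  exact ⟨x, w, v, y, _, r, hlr, rfl, by simpa using hwsZ, rfl, rfl⟩

theorem Reduces.exists_decomposition (hmon : Monadic R) {μ X N : List σ}
    (hμ : Irreducible R μ) (hX : Irreducible R X) (h : Reduces R (μ ++ X) N) :
    ∃ p s X₁ Z, p <+: μ ∧ s.length ≤ 1 ∧ X = X₁ ++ Z ∧ N = p ++ s ++ Z ∧
      Reduces R (μ ++ X₁) (p ++ s) := by
  induction h with
  | refl => exact ⟨μ, [], [], X, prefix_rfl, by simp, rfl, by simp, by simpa using .refl⟩
  | tail _ hstep ih =>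
    obtain ⟨p, s, X₁, Z, hpμ, hs, rfl, rfl, hred⟩ := ih
    obtain ⟨x, w, v, y, l, r, hlr, rfl, rfl, rfl, rfl⟩ :=
      hstep.exists_spanning_redex (hμ.of_infix hpμ.isInfix) (hX.of_infix infix_append_right) hs
    refine ⟨x, r, X₁ ++ v, y, (prefix_append x w).trans hpμ, (hmon _ hlr).2, by simp, rfl, ?_⟩
    have hred' : Reduces R (μ ++ (X₁ ++ v)) (x ++ (w ++ s ++ v)) := by
      simpa using hred.append_right v
    exact hred'.tail ⟨x, [], _, r, hlr, by simp, by simp⟩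

theorem NormalizesTo.exists_mp_split (hmon : Monadic R) {μ X N : List σ}
    (hμ : Irreducible R μ) (hX : Irreducible R X) (h : NormalizesTo R (μ ++ X) N) :
    ∃ X₁ Z γ, γ ∈ MP R μ ∧ X = X₁ ++ Z ∧ N = γ ++ Z ∧ NormalizesTo R (μ ++ X₁) γ := by
  obtain ⟨p, s, X₁, Z, hpμ, hs, hX₁, rfl, hred⟩ := h.1.exists_decomposition hmon hμ hX
  have hγ : Irreducible R (p ++ s) := h.2.of_infix infix_append_left
  exact ⟨X₁, Z, p ++ s, ⟨p, s, hpμ, hs, .refl, hγ⟩, hX₁, rfl, hred, hγ⟩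

theorem Joins.exists_mp_split (hmon : Monadic R) {μ X Y : List σ} (hμ : Irreducible R μ)
    (hX : Irreducible R X) (hY : Irreducible R Y) (hXY : X ≠ Y)
    (h : Joins R (μ ++ X) (μ ++ Y)) :
    ∃ X' Y' W γ, γ ∈ MP R μ ∧ X = X' ++ W ∧ Y = Y' ++ W ∧ X' ≠ Y' ∧
      NormalizesTo R (μ ++ X') γ ∧ NormalizesTo R (μ ++ Y') γ := by
  obtain ⟨t, hXt, hYt⟩ := h
  obtain ⟨N, htN, hN⟩ := exists_normalizesTo hmon t
  obtain ⟨X₁, Z, α, hα, rfl, rfl, hXα⟩ :=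
    NormalizesTo.exists_mp_split hmon hμ hX ⟨hXt.trans htN, hN⟩
  obtain ⟨Y₁, Z', β, hβ, rfl, hαβ, hYβ⟩ :=
    NormalizesTo.exists_mp_split hmon hμ hY ⟨hYt.trans htN, hN⟩
  clear hX hY hXt hYt htN hN
  wlog hle : Z.length ≤ Z'.length generalizing X₁ Y₁ Z Z' α β
  · obtain ⟨Y', X', W, γ, hγ, hY', hX', hne, hYγ, hXγ⟩ :=
      this Y₁ Z' β hβ hYβ X₁ Z α hα hXY.symm hαβ.symm hXα (by omega)
    exact ⟨X', Y', W, γ, hγ, hX', hY', hne.symm, hXγ, hYγ⟩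
  obtain ⟨V, rfl⟩ : Z <:+ Z' := suffix_of_suffix_length_le ⟨α, rfl⟩ ⟨β, hαβ.symm⟩ hle
  obtain rfl : α = β ++ V := append_cancel_right (hαβ.trans (append_assoc ..).symm)
  refine ⟨X₁, Y₁ ++ V, Z, β ++ V, hα, rfl, by simp, ?_, hXα, ?_, hXα.2⟩
  · rintro rfl
    exact hXY (by simp)
  · simpa using hYβ.1.append_right V

end SRS

theorem monadic_one_mapping_characterization_general {σ : Type*}
    (R : List (List σ × List σ)) (hmon : SRS.Monadic R)
    (μ X Y : List σ) (hμ : SRS.Irreducible R μ)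
    (hX : SRS.Irreducible R X) (hY : SRS.Irreducible R Y) (hXY : X ≠ Y) :
    SRS.Joins R (μ ++ X) (μ ++ Y) ↔
      ∃ X' Y' W γ : List σ,
        γ ∈ SRS.MP R μ ∧
        X = X' ++ W ∧ Y = Y' ++ W ∧ X' ≠ Y' ∧
        SRS.NormalizesTo R (μ ++ X') γ ∧ SRS.NormalizesTo R (μ ++ Y') γ := by
  refine ⟨SRS.Joins.exists_mp_split hmon hμ hX hY hXY, ?_⟩
  rintro ⟨X', Y', W, γ, -, rfl, rfl, -, hXγ, hYγ⟩
  have hjoin : SRS.Joins R (μ ++ X') (μ ++ Y') := ⟨γ, hXγ.1, hYγ.1⟩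
  simpa only [List.append_assoc] using hjoin.append_right W

/-- For a finite monadic convergent SRS `R` and irreducible
strings `μ, X, Y` with `X ≠ Y`:  `μX ↓_R μY` iff there are strings
`X', Y', W, γ` with `γ ∈ MP(μ)`, `X = X'W`, `Y = Y'W`, `X' ≠ Y'`, and
`μX' →!_R γ`, `μY' →!_R γ`. -/
theorem monadic_one_mapping_characterization {σ : Type*} [Fintype σ]
    (R : List (List σ × List σ)) (hmon : SRS.Monadic R) (hconv : SRS.Convergent R)
    (μ X Y : List σ) (hμ : SRS.Irreducible R μ)
    (hX : SRS.Irreducible R X) (hY : SRS.Irreducible R Y) (hXY : X ≠ Y) :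
    SRS.Joins R (μ ++ X) (μ ++ Y) ↔
      ∃ X' Y' W γ : List σ,
        γ ∈ SRS.MP R μ ∧
        X = X' ++ W ∧ Y = Y' ++ W ∧ X' ≠ Y' ∧
        SRS.NormalizesTo R (μ ++ X') γ ∧ SRS.NormalizesTo R (μ ++ Y') γ :=
  monadic_one_mapping_characterization_general R hmon μ X Y hμ hX hY hXY
end

section
/- Fix intermediate dominoes (x_1, y_1), …, (x_n, y_n) and end domino (x_{n+1}, y_{n+1}) over {a, b}, and let R1 be the string rewriting system constructed from them as in the context. Then for every start domino (x_0, y_0) of nonempty strings over {a, b}, the GPCP instance ⟨(x_0, y_0), {(x_i, y_i)}_{i=1}^n, (x_{n+1}, y_{n+1})⟩ has a solution if and only if there exist strings w1, w2 over Σ̂ such that x_0·¢1·w1 →!_{R1} #1·w2 and y_0·¢2·w1 →!_{R1} #2·w2. -/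
/-! ### The alphabet `Σ̂` and rewriting system `R₁`

Letters of `{a, b}` are modelled by `Bool` (`true ↦ a`, `false ↦ b`).  The
intermediate dominoes `(x₁, y₁), …, (x_n, y_n)` and the end domino
`(x_{n+1}, y_{n+1})` are given by `x y : Fin (n + 1) → List Bool`, where index
`j : Fin (n + 1)` stands for the domino with index `j + 1`; thus `j` with
`(j : ℕ) < n` are the intermediate dominoes and `j = Fin.last n` is the end
domino.  Correspondingly `Alph.c j` denotes the symbol `c_{j+1}`. -/

/-- The alphabet `Σ̂ = {a, b} ∪ {c₁, …, c_{n+1}} ∪ {¢₁, ¢₂, $, #₁, #₂}`. -/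
inductive Alph (n : ℕ) : Type
  | a | b
  | c (j : Fin (n + 1))
  | cent1 | cent2 | dollar | hash1 | hash2

/-- Embedding of strings over `{a, b}` into strings over `Σ̂`. -/
def emb {n : ℕ} (w : List Bool) : List (Alph n) :=
  w.map fun s => if s then Alph.a else Alph.b

/-- The string rewriting system `R₁`:
`¢₁·cᵢ → xᵢ·¢₁`, `¢₂·cᵢ → yᵢ·¢₂` for `1 ≤ i ≤ n`;
`¢₁·c_{n+1} → #₁·x_{n+1}·$`, `¢₂·c_{n+1} → #₂·y_{n+1}·$`;
`s·#₁ → #₁·s`, `s·#₂ → #₂·s` for `s ∈ {a, b}`. -/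
def R1 (n : ℕ) (x y : Fin (n + 1) → List Bool) :
    List (List (Alph n) × List (Alph n)) :=
  ((List.finRange (n + 1)).flatMap fun (j : Fin (n + 1)) =>
    if (j : ℕ) < n then
      [ ([Alph.cent1, Alph.c j], emb (x j) ++ [Alph.cent1]),
        ([Alph.cent2, Alph.c j], emb (y j) ++ [Alph.cent2]) ]
    else
      [ ([Alph.cent1, Alph.c j], [Alph.hash1] ++ emb (x j) ++ [Alph.dollar]),
        ([Alph.cent2, Alph.c j], [Alph.hash2] ++ emb (y j) ++ [Alph.dollar]) ])
  ++ ([true, false].flatMap fun s =>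
      [ ([(if s then Alph.a else Alph.b), Alph.hash1],
         [Alph.hash1, (if s then Alph.a else Alph.b)]),
        ([(if s then Alph.a else Alph.b), Alph.hash2],
         [Alph.hash2, (if s then Alph.a else Alph.b)]) ])

/-- The GPCP instance with start domino `(x₀, y₀)`, intermediate dominoes
`(x_j, y_j)` (`1 ≤ j ≤ n`) and end domino `(x_{n+1}, y_{n+1})` has a solution. -/
def GPCPSol (n : ℕ) (x₀ y₀ : List Bool) (x y : Fin (n + 1) → List Bool) : Prop :=
  ∃ l : List (Fin (n + 1)), (∀ j ∈ l, (j : ℕ) < n) ∧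
    x₀ ++ l.flatMap x ++ x (Fin.last n) = y₀ ++ l.flatMap y ++ y (Fin.last n)


/-!
Reading the control word `w₁ = c_{i₁} ⋯ c_{i_m} c_{n+1} ⋯`, the marker `¢₁` leaves
`x_{i₁} ⋯ x_{i_m}` behind it and at `c_{n+1}` turns into `#₁ x_{n+1} $`, after which `#₁` travels
left across the word produced so far; a solution of the GPCP instance therefore yields a common
normal form for both tracks.

Conversely, every string reachable from `x₀ ¢₁ w₁` has one of these two shapes (`R1.Sweeping`,
`R1.Migrating`), except that the part of `w₁` not yet read by the marker may have been rewritten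
on its own. Since no right-hand side begins with a `c`, the marker still reads the original
symbols of `w₁`. A reduct beginning with `#₁` is thus `#₁ x₀ x_{i₁} ⋯ x_{i_m} x_{n+1} $ ⋯` with
`c_{i₁} ⋯ c_{i_m} c_{n+1}` a prefix of `w₁`. The first `c_{n+1}` in `w₁` and the first `$` in
`w₂` determine the index sequence and the word, so the two tracks agree on both.
-/

namespace SRS

variable {σ : Type*} {R : List (List σ × List σ)}

theorem Step.append_left {u v : List σ} (h : Step R u v) (p : List σ) :
    Step R (p ++ u) (p ++ v) := by
  obtain ⟨a, b, l, r, hlr, rfl, rfl⟩ := h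
  exact ⟨p ++ a, b, l, r, hlr, by simp, by simp⟩

theorem Step.of_mem {l r : List σ} (h : (l, r) ∈ R) : Step R l r :=
  ⟨[], [], l, r, h, by simp, by simp⟩

theorem Reduces.append_left {u v : List σ} (h : Reduces R u v) (p : List σ) :
    Reduces R (p ++ u) (p ++ v) :=
  Relation.ReflTransGen.lift (p ++ ·) (fun _ _ h ↦ h.append_left p) _ _ h

theorem reduces_swap {h : σ} {p : List σ} (hR : ∀ s ∈ p, ([s, h], [h, s]) ∈ R) (t : List σ) :
    Reduces R (p ++ h :: t) (h :: (p ++ t)) := by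
  induction p with
  | nil => exact .refl
  | cons s p ih =>
    have hswap : Step R ([] ++ [s, h] ++ (p ++ t)) ([] ++ [h, s] ++ (p ++ t)) :=
      ⟨[], p ++ t, _, _, hR s (by simp), rfl, rfl⟩
    exact (ih fun s' hs' ↦ hR s' (by simp [hs'])).append_left [s] |>.tail hswap

theorem reduces_sweep {ι : Type*} (c : ι → σ) (g : ι → List σ) {d : σ} {L : List ι}
    (hR : ∀ j ∈ L, ([d, c j], g j ++ [d]) ∈ R) (v : List σ) :
    Reduces R (d :: (L.map c ++ v)) (L.flatMap g ++ d :: v) := by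
  induction L with
  | nil => exact .refl
  | cons j L ih =>
    have hstep : Step R (d :: c j :: (L.map c ++ v)) (g j ++ d :: (L.map c ++ v)) :=
      ⟨[], L.map c ++ v, _, _, hR j (by simp), rfl, by simp⟩
    rw [List.map_cons, List.flatMap_cons, List.append_assoc]
    exact .head hstep ((ih fun j' hj' ↦ hR j' (by simp [hj'])).append_left (g j))

theorem Step.cons_inv {s : σ} (hR : ∀ l r, (l, r) ∈ R → ∃ t r', r = t :: r' ∧ t ≠ s)
    {u v : List σ} (h : Step R u (s :: v)) : ∃ u', u = s :: u' ∧ Step R u' v := by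
  obtain ⟨a, b, l, r, hlr, rfl, hv⟩ := h
  cases a with
  | nil =>
    obtain ⟨t, r', rfl, hts⟩ := hR l r hlr
    simp only [List.nil_append, List.cons_append, List.cons.injEq] at hv
    exact absurd hv.1.symm hts
  | cons a₀ a =>
    simp only [List.cons_append, List.cons.injEq] at hv
    obtain ⟨rfl, rfl⟩ := hv
    exact ⟨a ++ l ++ b, rfl, a, b, l, r, hlr, rfl, rfl⟩

theorem Reduces.cons_inv {s : σ} (hR : ∀ l r, (l, r) ∈ R → ∃ t r', r = t :: r' ∧ t ≠ s)
    {u v : List σ} (h : Reduces R u (s :: v)) : ∃ u', u = s :: u' ∧ Reduces R u' v := by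
  induction h using Relation.ReflTransGen.head_induction_on with
  | refl => exact ⟨v, rfl, .refl⟩
  | head hstep _ ih =>
    obtain ⟨u', rfl, hu'⟩ := ih
    obtain ⟨u'', rfl, hstep'⟩ := hstep.cons_inv hR
    exact ⟨u'', rfl, .head hstep' hu'⟩

end SRS

namespace Alph

variable {n : ℕ}

def ofBool (s : Bool) : Alph n := if s then a else b

def cent : Bool → Alph n
  | true => cent1
  | false => cent2

def hash : Bool → Alph n
  | true => hash1
  | false => hash2

@[simp] theorem ofBool_eq_iff {s : Bool} {t : Alph n} :
    ofBool s = t ↔ s = true ∧ t = a ∨ s = false ∧ t = b := by cases s <;> simp [ofBool, eq_comm]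

@[simp] theorem eq_ofBool_iff {s : Bool} {t : Alph n} :
    t = ofBool s ↔ s = true ∧ t = a ∨ s = false ∧ t = b := by rw [eq_comm, ofBool_eq_iff]

@[simp] theorem cent_eq_iff {k : Bool} {t : Alph n} :
    cent k = t ↔ k = true ∧ t = cent1 ∨ k = false ∧ t = cent2 := by cases k <;> simp [cent, eq_comm]

@[simp] theorem eq_cent_iff {k : Bool} {t : Alph n} :
    t = cent k ↔ k = true ∧ t = cent1 ∨ k = false ∧ t = cent2 := by rw [eq_comm, cent_eq_iff]

@[simp] theorem hash_eq_iff {k : Bool} {t : Alph n} :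
    hash k = t ↔ k = true ∧ t = hash1 ∨ k = false ∧ t = hash2 := by cases k <;> simp [hash, eq_comm]

@[simp] theorem eq_hash_iff {k : Bool} {t : Alph n} :
    t = hash k ↔ k = true ∧ t = hash1 ∨ k = false ∧ t = hash2 := by rw [eq_comm, hash_eq_iff]

theorem c_last_notMem_map {L : List (Fin (n + 1))} (hL : ∀ j ∈ L, (j : ℕ) < n) :
    c (Fin.last n) ∉ L.map c := by
  simpa using fun h ↦ (hL _ h).ne rfl

end Alph

theorem List.append_cons_cons_eq_append_cases {α : Type*} {a b u v : List α} {s₁ s₂ : α}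
    (h : a ++ s₁ :: s₂ :: b = u ++ v) (hs₂ : s₂ ∉ u) :
    (u = a ++ [s₁] ∧ v = s₂ :: b) ∨ ∃ t, a = u ++ t ∧ v = t ++ s₁ :: s₂ :: b := by
  rcases List.append_eq_append_iff.1 h with ⟨t, rfl, ht⟩ | ⟨t, rfl, rfl⟩
  · rcases t with _ | ⟨t₁, _ | ⟨t₂, t⟩⟩
    · exact .inr ⟨[], by simp, by simpa using ht.symm⟩
    · simp only [List.cons_append, List.nil_append, List.cons.injEq] at ht
      obtain ⟨rfl, rfl⟩ := ht
      exact .inl ⟨rfl, rfl⟩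
    · simp only [List.cons_append, List.cons.injEq] at ht
      obtain ⟨rfl, rfl, -⟩ := ht
      simp at hs₂
  · exact .inr ⟨t, rfl, rfl⟩

theorem List.append_cons_inj_of_notMem_left {α : Type*} {u₁ u₂ v₁ v₂ : List α} {d : α}
    (h : u₁ ++ d :: v₁ = u₂ ++ d :: v₂) (h₁ : d ∉ u₁) (h₂ : d ∉ u₂) : u₁ = u₂ ∧ v₁ = v₂ := by
  rcases List.append_eq_append_iff.1 h with ⟨t, rfl, ht⟩ | ⟨t, rfl, ht⟩
  · cases t with
    | nil => simpa using ht
    | cons t₀ t => simp only [List.cons_append, List.cons.injEq] at ht; simp [← ht.1] at h₂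
  · cases t with
    | nil => simpa using ht.symm
    | cons t₀ t => simp only [List.cons_append, List.cons.injEq] at ht; simp [← ht.1] at h₁

section Emb

variable {n : ℕ}

@[simp] theorem emb_nil : (emb [] : List (Alph n)) = [] := rfl

@[simp] theorem emb_cons (s : Bool) (w : List Bool) :
    (emb (s :: w) : List (Alph n)) = Alph.ofBool s :: emb w := rfl

@[simp] theorem emb_append (u w : List Bool) : (emb (u ++ w) : List (Alph n)) = emb u ++ emb w :=
  List.map_append

@[simp] theorem mem_emb {t : Alph n} {w : List Bool} : t ∈ emb w ↔ ∃ s ∈ w, Alph.ofBool s = t :=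
  List.mem_map

theorem emb_injective : Function.Injective (emb : List Bool → List (Alph n)) :=
  List.map_injective_iff.2 fun s t h ↦ by cases s <;> cases t <;> simp_all

theorem emb_eq_append_singleton {p : List Bool} {a : List (Alph n)} {s : Bool}
    (h : emb p = a ++ [Alph.ofBool s]) : ∃ p', p = p' ++ [s] ∧ a = emb p' := by
  obtain ⟨p', l, rfl, rfl, hl⟩ := List.map_eq_append_iff.1 h
  obtain ⟨s', rfl, hs'⟩ := List.map_eq_singleton_iff.1 hl
  obtain rfl : s' = s := by cases s <;> cases s' <;> simp_all
  exact ⟨p', rfl, rfl⟩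

end Emb

namespace R1

open SRS

variable {n : ℕ} {x y : Fin (n + 1) → List Bool}

def centRhs (f : Fin (n + 1) → List Bool) (k : Bool) (j : Fin (n + 1)) : List (Alph n) :=
  if (j : ℕ) < n then emb (f j) ++ [Alph.cent k]
  else Alph.hash k :: (emb (f j) ++ [Alph.dollar])

theorem mem_iff {l r : List (Alph n)} :
    (l, r) ∈ R1 n x y ↔ ∃ k, (∃ j, l = [Alph.cent k, Alph.c j] ∧ r = centRhs (cond k x y) k j) ∨
      ∃ s, l = [Alph.ofBool s, Alph.hash k] ∧ r = [Alph.hash k, Alph.ofBool s] := by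
  simp only [R1, List.mem_append, List.mem_flatMap, List.mem_finRange, true_and]
  constructor
  · rintro (⟨j, hj⟩ | ⟨s, -, hs⟩)
    · split_ifs at hj with hjn <;>
        rcases List.mem_pair.1 hj with h | h <;> simp only [Prod.mk.injEq] at h <;>
        obtain ⟨rfl, rfl⟩ := h
      exacts [⟨true, .inl ⟨j, rfl, by simp [centRhs, hjn]⟩⟩,
        ⟨false, .inl ⟨j, rfl, by simp [centRhs, hjn]⟩⟩,
        ⟨true, .inl ⟨j, rfl, by simp [centRhs, hjn]⟩⟩,
        ⟨false, .inl ⟨j, rfl, by simp [centRhs, hjn]⟩⟩]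
    · rcases List.mem_pair.1 hs with h | h <;> simp only [Prod.mk.injEq] at h <;>
        obtain ⟨rfl, rfl⟩ := h
      exacts [⟨true, .inr ⟨s, rfl, rfl⟩⟩, ⟨false, .inr ⟨s, rfl, rfl⟩⟩]
  · rintro ⟨k, ⟨j, rfl, rfl⟩ | ⟨s, rfl, rfl⟩⟩
    · left
      refine ⟨j, ?_⟩
      cases k <;> by_cases hjn : (j : ℕ) < n <;> simp [centRhs, hjn, Alph.cent, Alph.hash]
    · right
      cases k <;> cases s <;> simp [Alph.ofBool, Alph.hash]

theorem cent_mem (k : Bool) (j : Fin (n + 1)) :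
    ([Alph.cent k, Alph.c j], centRhs (cond k x y) k j) ∈ R1 n x y :=
  mem_iff.2 ⟨k, .inl ⟨j, rfl, rfl⟩⟩

theorem swap_mem (k s : Bool) :
    ([Alph.ofBool s, Alph.hash k], [Alph.hash k, Alph.ofBool s]) ∈ R1 n x y :=
  mem_iff.2 ⟨k, .inr ⟨s, rfl, rfl⟩⟩

theorem lhs_cases {s₁ s₂ : Alph n} {r : List (Alph n)} (h : ([s₁, s₂], r) ∈ R1 n x y) :
    (∃ k j, s₁ = Alph.cent k ∧ s₂ = Alph.c j) ∨ ∃ k s, s₁ = Alph.ofBool s ∧ s₂ = Alph.hash k := by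
  rcases mem_iff.1 h with ⟨k, ⟨j, hl, -⟩ | ⟨s, hl, -⟩⟩ <;>
    simp only [List.cons.injEq, and_true] at hl
  exacts [.inl ⟨k, j, hl⟩, .inr ⟨k, s, hl⟩]

theorem of_cent_mem {k : Bool} {s₂ : Alph n} {r : List (Alph n)}
    (h : ([Alph.cent k, s₂], r) ∈ R1 n x y) :
    ∃ j, s₂ = Alph.c j ∧ r = centRhs (cond k x y) k j := by
  rcases mem_iff.1 h with ⟨k', ⟨j, hl, rfl⟩ | ⟨s, hl, -⟩⟩ <;>
    simp only [List.cons.injEq, and_true] at hl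
  · obtain rfl : k' = k := by cases k <;> cases k' <;> simp_all
    exact ⟨j, hl.2, rfl⟩
  · simp at hl

theorem of_hash_mem {k : Bool} {s₁ : Alph n} {r : List (Alph n)}
    (h : ([s₁, Alph.hash k], r) ∈ R1 n x y) :
    ∃ s, s₁ = Alph.ofBool s ∧ r = [Alph.hash k, Alph.ofBool s] := by
  rcases mem_iff.1 h with ⟨k', ⟨j, hl, -⟩ | ⟨s, hl, rfl⟩⟩ <;>
    simp only [List.cons.injEq, and_true] at hl
  · simp at hl
  · obtain rfl : k' = k := by cases k <;> cases k' <;> simp_all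
    exact ⟨s, hl.1, rfl⟩

theorem rhs_head_ne_c (j : Fin (n + 1)) {l r : List (Alph n)} (h : (l, r) ∈ R1 n x y) :
    ∃ t r', r = t :: r' ∧ t ≠ Alph.c j := by
  rcases mem_iff.1 h with ⟨k, ⟨j', -, rfl⟩ | ⟨s, -, rfl⟩⟩
  · unfold centRhs
    split_ifs
    · cases hf : cond k x y j' with
      | nil => exact ⟨_, _, rfl, by simp⟩
      | cons s w => exact ⟨Alph.ofBool s, emb w ++ [Alph.cent k], rfl, by simp⟩
    · exact ⟨_, _, rfl, by simp⟩
  · exact ⟨_, _, rfl, by simp⟩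

theorem exists_redex_of_step {u v : List (Alph n)} (h : Step (R1 n x y) u v) :
    ∃ a b s₁ s₂ r, ([s₁, s₂], r) ∈ R1 n x y ∧ u = a ++ s₁ :: s₂ :: b ∧ v = a ++ r ++ b := by
  obtain ⟨a, b, l, r, hlr, rfl, rfl⟩ := h
  obtain ⟨k, ⟨j, rfl, -⟩ | ⟨s, rfl, -⟩⟩ := mem_iff.1 hlr <;>
    exact ⟨a, b, _, _, r, hlr, by simp, rfl⟩

theorem irreducible_hash (k : Bool) (q : List Bool) :
    Irreducible (R1 n x y) (Alph.hash k :: (emb q ++ [Alph.dollar])) := by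
  intro v hs
  obtain ⟨a, b, s₁, s₂, r, hrule, hu, -⟩ := exists_redex_of_step hs
  rcases a with _ | ⟨a₀, a⟩
  · rcases lhs_cases hrule with ⟨k', j, rfl, rfl⟩ | ⟨k', s, rfl, rfl⟩ <;> simp at hu
  · have hs₂ : s₂ ∈ emb q ++ [Alph.dollar] := by simp_all
    rcases lhs_cases hrule with ⟨k', j, rfl, rfl⟩ | ⟨k', s, rfl, rfl⟩ <;> simp at hs₂

/-- `¢ₖ` has read `c_j` for `j ∈ L` off the front of `w₁`; the unread rest `r₀` of `w₁` may
meanwhile have been rewritten to `rest`. In `Migrating`, `¢ₖ` has read `c_{n+1}` as well and `#ₖ`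
has travelled left up to the end of `p`. -/
def Sweeping (x y : Fin (n + 1) → List Bool) (k : Bool) (z₀ : List Bool)
    (w₁ u : List (Alph n)) : Prop :=
  ∃ (L : List (Fin (n + 1))) (r₀ rest : List (Alph n)),
    (∀ j ∈ L, (j : ℕ) < n) ∧ w₁ = L.map Alph.c ++ r₀ ∧ Reduces (R1 n x y) r₀ rest ∧
    u = emb (z₀ ++ L.flatMap (cond k x y)) ++ Alph.cent k :: rest

def Migrating (x y : Fin (n + 1) → List Bool) (k : Bool) (z₀ : List Bool)
    (w₁ u : List (Alph n)) : Prop :=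
  ∃ (L : List (Fin (n + 1))) (r₀ rest : List (Alph n)) (p q : List Bool),
    (∀ j ∈ L, (j : ℕ) < n) ∧ w₁ = L.map Alph.c ++ Alph.c (Fin.last n) :: r₀ ∧
    Reduces (R1 n x y) r₀ rest ∧
    p ++ q = z₀ ++ L.flatMap (cond k x y) ++ cond k x y (Fin.last n) ∧
    u = emb p ++ Alph.hash k :: (emb q ++ Alph.dollar :: rest)

variable {k : Bool} {z₀ : List Bool} {w₁ u v : List (Alph n)}

theorem Sweeping.step (h : Sweeping x y k z₀ w₁ u) (hs : Step (R1 n x y) u v) :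
    Sweeping x y k z₀ w₁ v ∨ Migrating x y k z₀ w₁ v := by
  obtain ⟨L, r₀, rest, hL, rfl, hr₀, rfl⟩ := h
  obtain ⟨a, b, s₁, s₂, r, hrule, hu, rfl⟩ := exists_redex_of_step hs
  set z := z₀ ++ L.flatMap (cond k x y) with hz
  have hs₂ : s₂ ∉ emb z ++ [Alph.cent k] := by
    rcases lhs_cases hrule with ⟨k', j, -, rfl⟩ | ⟨k', s, -, rfl⟩ <;> simp
  rw [← List.singleton_append, ← List.append_assoc] at hu
  rcases List.append_cons_cons_eq_append_cases hu.symm hs₂ with ⟨hF, rfl⟩ | ⟨t, rfl, rfl⟩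
  · obtain ⟨rfl, hs₁⟩ := List.append_inj' hF rfl
    obtain rfl : s₁ = Alph.cent k := (List.singleton_inj.1 hs₁).symm
    obtain ⟨j, rfl, rfl⟩ := of_cent_mem hrule
    obtain ⟨r₁, rfl, hr₁⟩ := hr₀.cons_inv (fun _ _ ↦ rhs_head_ne_c j)
    by_cases hj : (j : ℕ) < n
    · refine .inl ⟨L ++ [j], r₁, b, ?_, by simp, hr₁, by simp [centRhs, hj, hz]⟩
      simpa [or_imp, forall_and] using ⟨hL, hj⟩
    · obtain rfl : j = Fin.last n := Fin.ext (by rw [Fin.val_last]; omega)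
      exact .inr ⟨L, r₁, b, z, _, hL, rfl, hr₁, rfl, by simp [centRhs]⟩
  · exact .inl ⟨L, r₀, t ++ r ++ b, hL, rfl, hr₀.tail ⟨t, b, _, r, hrule, by simp, rfl⟩,
      by simp [hz]⟩

theorem Migrating.step (h : Migrating x y k z₀ w₁ u) (hs : Step (R1 n x y) u v) :
    Migrating x y k z₀ w₁ v := by
  obtain ⟨L, r₀, rest, p, q, hL, rfl, hr₀, hpq, rfl⟩ := h
  obtain ⟨a, b, s₁, s₂, r, hrule, hu, rfl⟩ := exists_redex_of_step hs
  have hs₂ : s₂ ∉ emb p ∧ s₂ ∉ emb q ++ [Alph.dollar] := by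
    rcases lhs_cases hrule with ⟨k', j, -, rfl⟩ | ⟨k', s, -, rfl⟩ <;> simp
  have hs₁ : s₁ ≠ Alph.hash k ∧ s₁ ≠ Alph.dollar := by
    rcases lhs_cases hrule with ⟨k', j, rfl, -⟩ | ⟨k', s, rfl, -⟩ <;> simp
  rcases List.append_cons_cons_eq_append_cases hu.symm hs₂.1 with ⟨hp, hb⟩ | ⟨t, rfl, ht⟩
  · obtain ⟨rfl, rfl⟩ := List.cons.inj hb
    obtain ⟨s, rfl, rfl⟩ := of_hash_mem hrule
    obtain ⟨p, rfl, rfl⟩ := emb_eq_append_singleton hp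
    exact ⟨L, r₀, rest, p, s :: q, hL, rfl, hr₀, by simpa using hpq, by simp⟩
  obtain ⟨-, ht'⟩ | ⟨t, rfl, ht'⟩ := List.append_eq_cons_iff.1 ht.symm
  · exact absurd (List.cons.inj ht').1 hs₁.1
  rw [← List.singleton_append, ← List.append_assoc] at ht'
  rcases List.append_cons_cons_eq_append_cases ht'.symm hs₂.2 with ⟨hF, -⟩ | ⟨t', rfl, rfl⟩
  · exact absurd (List.append_inj' hF rfl).2 (by simpa using hs₁.2.symm)
  · exact ⟨L, r₀, t' ++ r ++ b, p, q, hL, rfl, hr₀.tail ⟨t', b, _, r, hrule, by simp, rfl⟩,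
      hpq, by simp⟩

theorem sweeping_or_migrating_of_reduces (h₀ : Sweeping x y k z₀ w₁ u)
    (h : Reduces (R1 n x y) u v) : Sweeping x y k z₀ w₁ v ∨ Migrating x y k z₀ w₁ v := by
  induction h with
  | refl => exact .inl h₀
  | tail _ hs ih => exact ih.elim (·.step hs) (.inr <| ·.step hs)

theorem exists_of_reduces_hash {w₂ : List (Alph n)}
    (h : Reduces (R1 n x y) (emb z₀ ++ [Alph.cent k] ++ w₁) (Alph.hash k :: w₂)) :
    ∃ (L : List (Fin (n + 1))) (r₀ rest : List (Alph n)), (∀ j ∈ L, (j : ℕ) < n) ∧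
      w₁ = L.map Alph.c ++ Alph.c (Fin.last n) :: r₀ ∧
      w₂ = emb (z₀ ++ L.flatMap (cond k x y) ++ cond k x y (Fin.last n)) ++
        Alph.dollar :: rest := by
  have h₀ : Sweeping x y k z₀ w₁ (emb z₀ ++ [Alph.cent k] ++ w₁) :=
    ⟨[], w₁, w₁, by simp, rfl, .refl, by simp⟩
  rcases sweeping_or_migrating_of_reduces h₀ h with
    ⟨L, -, rest, -, -, -, hu⟩ | ⟨L, r₀, rest, _ | ⟨s, p⟩, q, hL, hw₁, -, hpq, hu⟩
  · generalize z₀ ++ L.flatMap (cond k x y) = z at hu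
    cases z <;> simp at hu
  · simp only [List.nil_append] at hpq
    exact ⟨L, r₀, rest, hL, hw₁, by simpa [hpq] using hu⟩
  · simp at hu

theorem reduces_hash_of_sweep {L : List (Fin (n + 1))} (hL : ∀ j ∈ L, (j : ℕ) < n)
    (k : Bool) (z₀ : List Bool) :
    Reduces (R1 n x y) (emb z₀ ++ [Alph.cent k] ++ (L.map Alph.c ++ [Alph.c (Fin.last n)]))
      (Alph.hash k :: (emb (z₀ ++ L.flatMap (cond k x y) ++ cond k x y (Fin.last n)) ++
        [Alph.dollar])) := by
  set f := cond k x y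
  have sweep := (reduces_sweep (R := R1 n x y) (L := L) (d := Alph.cent k) Alph.c
    (fun j ↦ emb (f j))
    (fun j hj ↦ by simpa [centRhs, hL j hj] using cent_mem (x := x) (y := y) k j)
    [Alph.c (Fin.last n)]).append_left (emb z₀)
  have finish := (Step.of_mem (R := R1 n x y) (l := [Alph.cent k, Alph.c (Fin.last n)])
    (by simpa [centRhs] using cent_mem (x := x) (y := y) k (Fin.last n))).append_left
    (emb (z₀ ++ L.flatMap f))
  have swap := reduces_swap (R := R1 n x y) (p := emb (z₀ ++ L.flatMap f)) (h := Alph.hash k)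
    (fun s hs ↦ by obtain ⟨s, -, rfl⟩ := mem_emb.1 hs; exact swap_mem k s)
    (emb (f (Fin.last n)) ++ [Alph.dollar])
  have hemb : (emb (L.flatMap f) : List (Alph n)) = L.flatMap fun j ↦ emb (f j) :=
    List.map_flatMap ..
  simp only [emb_append, hemb, List.append_assoc, List.cons_append] at sweep finish swap ⊢
  exact sweep.trans (.head finish swap)

end R1

theorem gpcp_iff_R1_reduction_general (n : ℕ) (x y : Fin (n + 1) → List Bool)
    (x₀ y₀ : List Bool) :
    GPCPSol n x₀ y₀ x y ↔
      ∃ w₁ w₂ : List (Alph n),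
        SRS.NormalizesTo (R1 n x y) (emb x₀ ++ [Alph.cent1] ++ w₁)
          ([Alph.hash1] ++ w₂) ∧
        SRS.NormalizesTo (R1 n x y) (emb y₀ ++ [Alph.cent2] ++ w₁)
          ([Alph.hash2] ++ w₂) := by
  constructor
  · rintro ⟨L, hL, hsol⟩
    have h₂ := R1.reduces_hash_of_sweep (x := x) (y := y) hL false y₀
    rw [cond_false, ← hsol] at h₂
    exact ⟨_, _, ⟨R1.reduces_hash_of_sweep hL true x₀, R1.irreducible_hash true _⟩,
      ⟨h₂, R1.irreducible_hash false _⟩⟩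
  · rintro ⟨w₁, w₂, ⟨h₁, -⟩, ⟨h₂, -⟩⟩
    obtain ⟨L, r₁, s₁, hL, rfl, rfl⟩ := R1.exists_of_reduces_hash (k := true) h₁
    obtain ⟨L', r₂, s₂, hL', hw₁, hw₂⟩ := R1.exists_of_reduces_hash (k := false) h₂
    obtain rfl : L = L' := List.map_injective_iff.2 (fun _ _ ↦ Alph.c.inj)
      (List.append_cons_inj_of_notMem_left hw₁ (Alph.c_last_notMem_map hL)
        (Alph.c_last_notMem_map hL')).1
    exact ⟨L, hL, emb_injective
      (List.append_cons_inj_of_notMem_left hw₂ (by simp) (by simp)).1⟩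

/-- For fixed intermediate and end dominoes (all nonempty)
and every nonempty start domino `(x₀, y₀)`, the GPCP instance has a solution
iff there exist `w₁, w₂` over `Σ̂` with `x₀·¢₁·w₁ →!_{R₁} #₁·w₂` and
`y₀·¢₂·w₁ →!_{R₁} #₂·w₂`. -/
theorem gpcp_iff_R1_reduction (n : ℕ) (x y : Fin (n + 1) → List Bool)
    (hx : ∀ j, x j ≠ []) (hy : ∀ j, y j ≠ [])
    (x₀ y₀ : List Bool) (hx₀ : x₀ ≠ []) (hy₀ : y₀ ≠ []) :
    GPCPSol n x₀ y₀ x y ↔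
      ∃ w₁ w₂ : List (Alph n),
        SRS.NormalizesTo (R1 n x y) (emb x₀ ++ [Alph.cent1] ++ w₁)
          ([Alph.hash1] ++ w₂) ∧
        SRS.NormalizesTo (R1 n x y) (emb y₀ ++ [Alph.cent2] ++ w₁)
          ([Alph.hash2] ++ w₂) :=
  gpcp_iff_R1_reduction_general n x y x₀ y₀
end
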